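/- Commutator identity: for smooth w and the operators D_2 = R²∂_x² and L = ∂_t + (λ²/2)R²∂_x² + λ²R∂_x, where R = R(t,x) solves the risk-tolerance PDE R_t + (λ²/2)R²R_{xx} = 0, one has [L, D_2]w = L(D_2 w) - D_2(L w) = -λ² R² R_{xx}(R w_{xx} + w_x). -/

import Mathlib

open Function

noncomputable def pd1 (f : ℝ → ℝ → ℝ) (t x : ℝ) : ℝ :=
  fderiv ℝ (Function.uncurry f) (t, x) (1, 0)

noncomputable def pd2 (f : ℝ → ℝ → ℝ) (t x : ℝ) : ℝ :=
  fderiv ℝ (Function.uncurry f) (t, x) (0, 1)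

variable {f u v : ℝ → ℝ → ℝ}

lemma sliceX (hf : ContDiff ℝ (⊤ : ℕ∞) (uncurry f)) (t : ℝ) : ContDiff ℝ (⊤ : ℕ∞) (f t) :=
  hf.comp (contDiff_const.prodMk contDiff_id)

lemma sliceT (hf : ContDiff ℝ (⊤ : ℕ∞) (uncurry f)) (x : ℝ) : ContDiff ℝ (⊤ : ℕ∞) (fun s => f s x) :=
  hf.comp (contDiff_id.prodMk contDiff_const)

lemma derivX (hf : ContDiff ℝ (⊤ : ℕ∞) (uncurry f)) (t x : ℝ) : deriv (f t) x = pd2 f t x := by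
  have h1 : HasFDerivAt (uncurry f) (fderiv ℝ (uncurry f) (t, x)) (t, x) :=
    (hf.differentiable (by simp) (t, x)).hasFDerivAt
  have h2 : HasDerivAt (fun y : ℝ => ((t : ℝ), y)) (0, 1) x :=
    HasDerivAt.prodMk (hasDerivAt_const x t) (hasDerivAt_id x)
  exact (h1.comp_hasDerivAt x h2).deriv

lemma derivT (hf : ContDiff ℝ (⊤ : ℕ∞) (uncurry f)) (t x : ℝ) :
    deriv (fun s => f s x) t = pd1 f t x := by
  have h1 : HasFDerivAt (uncurry f) (fderiv ℝ (uncurry f) (t, x)) (t, x) :=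
    (hf.differentiable (by simp) (t, x)).hasFDerivAt
  have h2 : HasDerivAt (fun s : ℝ => (s, (x : ℝ))) (1, 0) t :=
    HasDerivAt.prodMk (hasDerivAt_id t) (hasDerivAt_const t x)
  exact (h1.comp_hasDerivAt t h2).deriv

lemma contDiff_pd2 (hf : ContDiff ℝ (⊤ : ℕ∞) (uncurry f)) : ContDiff ℝ (⊤ : ℕ∞) (uncurry (pd2 f)) :=
  (hf.fderiv_right (by simp)).clm_apply contDiff_const

lemma contDiff_pd1 (hf : ContDiff ℝ (⊤ : ℕ∞) (uncurry f)) : ContDiff ℝ (⊤ : ℕ∞) (uncurry (pd1 f)) :=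
  (hf.fderiv_right (by simp)).clm_apply contDiff_const

lemma deriv2X (hf : ContDiff ℝ (⊤ : ℕ∞) (uncurry f)) (t x : ℝ) :
    deriv (deriv (f t)) x = pd2 (pd2 f) t x := by
  have h1 : deriv (f t) = pd2 f t := funext fun y => derivX hf t y
  rw [h1]
  exact derivX (contDiff_pd2 hf) t x

lemma pd_comm (hf : ContDiff ℝ (⊤ : ℕ∞) (uncurry f)) (t x : ℝ) :
    pd1 (pd2 f) t x = pd2 (pd1 f) t x := by
  have hd : DifferentiableAt ℝ (fderiv ℝ (uncurry f)) (t, x) :=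
    ((hf.fderiv_right (m := (⊤ : ℕ∞)) (by simp)).differentiable (by simp)) (t, x)
  have hsymm : IsSymmSndFDerivAt ℝ (uncurry f) (t, x) :=
    (hf.contDiffAt).isSymmSndFDerivAt (by simp [minSmoothness_of_isRCLikeNormedField]; exact WithTop.coe_le_coe.mpr le_top)
  have key2 := fderiv_clm_apply (𝕜 := ℝ) (c := fderiv ℝ (uncurry f))
    (u := fun _ : ℝ × ℝ => ((0 : ℝ), (1 : ℝ))) hd (differentiableAt_const _)
  have key1 := fderiv_clm_apply (𝕜 := ℝ) (c := fderiv ℝ (uncurry f))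
    (u := fun _ : ℝ × ℝ => ((1 : ℝ), (0 : ℝ))) hd (differentiableAt_const _)
  have e1 : pd1 (pd2 f) t x
      = fderiv ℝ (fderiv ℝ (uncurry f)) (t, x) ((1 : ℝ), (0 : ℝ)) ((0 : ℝ), (1 : ℝ)) := by
    have : pd1 (pd2 f) t x
        = fderiv ℝ (fun p : ℝ × ℝ => fderiv ℝ (uncurry f) p ((0 : ℝ), (1 : ℝ))) (t, x) (1, 0) :=
      rfl
    rw [this, key2]
    simp
  have e2 : pd2 (pd1 f) t x
      = fderiv ℝ (fderiv ℝ (uncurry f)) (t, x) ((0 : ℝ), (1 : ℝ)) ((1 : ℝ), (0 : ℝ)) := by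
    have : pd2 (pd1 f) t x
        = fderiv ℝ (fun p : ℝ × ℝ => fderiv ℝ (uncurry f) p ((1 : ℝ), (0 : ℝ))) (t, x) (0, 1) :=
      rfl
    rw [this, key1]
    simp
  rw [e1, e2, hsymm]

lemma pd2_add (hu : ContDiff ℝ (⊤ : ℕ∞) (uncurry u)) (hv : ContDiff ℝ (⊤ : ℕ∞) (uncurry v)) (t x : ℝ) :
    pd2 (fun a b => u a b + v a b) t x = pd2 u t x + pd2 v t x := by
  have huv : ContDiff ℝ (⊤ : ℕ∞) (uncurry fun a b => u a b + v a b) := hu.add hv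
  rw [← derivX huv, ← derivX hu, ← derivX hv]
  exact deriv_fun_add ((sliceX hu t).differentiable (by simp) x) ((sliceX hv t).differentiable (by simp) x)

lemma pd2_mul (hu : ContDiff ℝ (⊤ : ℕ∞) (uncurry u)) (hv : ContDiff ℝ (⊤ : ℕ∞) (uncurry v)) (t x : ℝ) :
    pd2 (fun a b => u a b * v a b) t x = pd2 u t x * v t x + u t x * pd2 v t x := by
  have huv : ContDiff ℝ (⊤ : ℕ∞) (uncurry fun a b => u a b * v a b) := hu.mul hv
  rw [← derivX huv, ← derivX hu, ← derivX hv]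
  exact deriv_fun_mul ((sliceX hu t).differentiable (by simp) x) ((sliceX hv t).differentiable (by simp) x)

lemma pd2_const_mul (c : ℝ) (hu : ContDiff ℝ (⊤ : ℕ∞) (uncurry u)) (t x : ℝ) :
    pd2 (fun a b => c * u a b) t x = c * pd2 u t x := by
  have hcu : ContDiff ℝ (⊤ : ℕ∞) (uncurry fun a b => c * u a b) := contDiff_const.mul hu
  rw [← derivX hcu, ← derivX hu]
  exact deriv_const_mul c ((sliceX hu t).differentiable (by simp) x)

lemma pd1_mul (hu : ContDiff ℝ (⊤ : ℕ∞) (uncurry u)) (hv : ContDiff ℝ (⊤ : ℕ∞) (uncurry v)) (t x : ℝ) :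
    pd1 (fun a b => u a b * v a b) t x = pd1 u t x * v t x + u t x * pd1 v t x := by
  have huv : ContDiff ℝ (⊤ : ℕ∞) (uncurry fun a b => u a b * v a b) := hu.mul hv
  rw [← derivT huv, ← derivT hu, ← derivT hv]
  exact deriv_fun_mul ((sliceT hu x).differentiable (by simp) t) ((sliceT hv x).differentiable (by simp) t)

/-- The operator `D₂ w = R² w_{xx}`. -/
noncomputable def Dop2 (R w : ℝ → ℝ → ℝ) (t x : ℝ) : ℝ :=
  (R t x) ^ 2 * deriv (deriv (w t)) x

/-- The linear operator `L w = w_t + (λ²/2)R²w_{xx} + λ²Rw_x`. -/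
noncomputable def Lop (lam : ℝ) (R w : ℝ → ℝ → ℝ) (t x : ℝ) : ℝ :=
  deriv (fun s => w s x) t + lam ^ 2 / 2 * (R t x) ^ 2 * deriv (deriv (w t)) x
    + lam ^ 2 * R t x * deriv (w t) x

/-- Commutator identity: `[L, D₂]w = -λ² R² R_{xx}(R w_{xx} + w_x)` when `R`
solves the risk-tolerance PDE `R_t + (λ²/2)R²R_{xx} = 0`. -/
theorem commutator_identity (lam : ℝ) (R w : ℝ → ℝ → ℝ)
    (hR : ContDiff ℝ (⊤ : ℕ∞) (Function.uncurry R))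
    (hw : ContDiff ℝ (⊤ : ℕ∞) (Function.uncurry w))
    (hRpos : ∀ t x, 0 < R t x)
    (hRpde : ∀ t x,
      deriv (fun s => R s x) t + lam ^ 2 / 2 * (R t x) ^ 2 * deriv (deriv (R t)) x = 0) :
    ∀ t x, Lop lam R (fun s y => Dop2 R w s y) t x
        - Dop2 R (fun s y => Lop lam R w s y) t x
      = -lam ^ 2 * (R t x) ^ 2 * deriv (deriv (R t)) x
          * (R t x * deriv (deriv (w t)) x + deriv (w t) x) := by
  intro t x
  have hW1 : ContDiff ℝ (⊤ : ℕ∞) (uncurry (pd2 w)) := contDiff_pd2 hw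
  have hW2 : ContDiff ℝ (⊤ : ℕ∞) (uncurry (pd2 (pd2 w))) := contDiff_pd2 hW1
  have hWt : ContDiff ℝ (⊤ : ℕ∞) (uncurry (pd1 w)) := contDiff_pd1 hw
  have hRx : ContDiff ℝ (⊤ : ℕ∞) (uncurry (pd2 R)) := contDiff_pd2 hR
  have hRW2 : ContDiff ℝ (⊤ : ℕ∞) (uncurry (fun s y => R s y * pd2 (pd2 w) s y)) := hR.mul hW2
  have hD' : ContDiff ℝ (⊤ : ℕ∞) (uncurry (fun s y => R s y * (R s y * pd2 (pd2 w) s y))) :=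
    hR.mul hRW2
  have hRW1 : ContDiff ℝ (⊤ : ℕ∞) (uncurry (fun s y => R s y * pd2 w s y)) := hR.mul hW1
  have hcD : ContDiff ℝ (⊤ : ℕ∞)
      (uncurry (fun s y => lam ^ 2 / 2 * (R s y * (R s y * pd2 (pd2 w) s y)))) :=
    contDiff_const.mul hD'
  have hcRW : ContDiff ℝ (⊤ : ℕ∞) (uncurry (fun s y => lam ^ 2 * (R s y * pd2 w s y))) :=
    contDiff_const.mul hRW1
  have h12 : ContDiff ℝ (⊤ : ℕ∞)
      (uncurry (fun s y => pd1 w s y + lam ^ 2 / 2 * (R s y * (R s y * pd2 (pd2 w) s y)))) :=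
    hWt.add hcD
  have hL' : ContDiff ℝ (⊤ : ℕ∞)
      (uncurry (fun s y => pd1 w s y + lam ^ 2 / 2 * (R s y * (R s y * pd2 (pd2 w) s y))
        + lam ^ 2 * (R s y * pd2 w s y))) := h12.add hcRW
  -- normalize the two argument functions
  have hDeq : (fun s y => Dop2 R w s y) = fun s y => R s y * (R s y * pd2 (pd2 w) s y) := by
    funext s y
    simp only [Dop2, deriv2X hw s y]
    ring
  have hLeq : (fun s y => Lop lam R w s y)
      = fun s y => pd1 w s y + lam ^ 2 / 2 * (R s y * (R s y * pd2 (pd2 w) s y))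
          + lam ^ 2 * (R s y * pd2 w s y) := by
    funext s y
    simp only [Lop, derivT hw s y, deriv2X hw s y, derivX hw s y]
    ring
  rw [hDeq, hLeq]
  simp only [Lop, Dop2]
  -- convert all remaining `deriv`s to pd-form
  have e1 : deriv (fun s => R s x * (R s x * pd2 (pd2 w) s x)) t
      = pd1 (fun s y => R s y * (R s y * pd2 (pd2 w) s y)) t x := derivT hD' t x
  have e2 : deriv (deriv (fun y => R t y * (R t y * pd2 (pd2 w) t y))) x
      = pd2 (pd2 (fun s y => R s y * (R s y * pd2 (pd2 w) s y))) t x := deriv2X hD' t x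
  have e3 : deriv (fun y => R t y * (R t y * pd2 (pd2 w) t y)) x
      = pd2 (fun s y => R s y * (R s y * pd2 (pd2 w) s y)) t x := derivX hD' t x
  have e4 : deriv (deriv (fun y => pd1 w t y + lam ^ 2 / 2 * (R t y * (R t y * pd2 (pd2 w) t y))
        + lam ^ 2 * (R t y * pd2 w t y))) x
      = pd2 (pd2 (fun s y => pd1 w s y + lam ^ 2 / 2 * (R s y * (R s y * pd2 (pd2 w) s y))
          + lam ^ 2 * (R s y * pd2 w s y))) t x := deriv2X hL' t x
  have e5 : deriv (deriv (R t)) x = pd2 (pd2 R) t x := deriv2X hR t x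
  have e6 : deriv (deriv (w t)) x = pd2 (pd2 w) t x := deriv2X hw t x
  have e7 : deriv (w t) x = pd2 w t x := derivX hw t x
  rw [e1, e2, e3, e4, e5, e6, e7]
  -- mixed partials commute
  have hswap : pd1 (pd2 w) = pd2 (pd1 w) := funext fun a => funext fun b => pd_comm hw a b
  have c1 : pd1 (pd2 (pd2 w)) t x = pd2 (pd2 (pd1 w)) t x := by
    rw [pd_comm hW1 t x, hswap]
  -- expand the t-derivative of D₂w
  have m1 : pd1 (fun s y => R s y * (R s y * pd2 (pd2 w) s y)) t x
      = pd1 R t x * (R t x * pd2 (pd2 w) t x)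
        + R t x * pd1 (fun s y => R s y * pd2 (pd2 w) s y) t x := pd1_mul hR hRW2 t x
  have m2 : pd1 (fun s y => R s y * pd2 (pd2 w) s y) t x
      = pd1 R t x * pd2 (pd2 w) t x + R t x * pd1 (pd2 (pd2 w)) t x := pd1_mul hR hW2 t x
  -- expand the x-derivative of D₂w
  have m3 : pd2 (fun s y => R s y * (R s y * pd2 (pd2 w) s y)) t x
      = pd2 R t x * (R t x * pd2 (pd2 w) t x)
        + R t x * pd2 (fun s y => R s y * pd2 (pd2 w) s y) t x := pd2_mul hR hRW2 t x
  have m4 : pd2 (fun s y => R s y * pd2 (pd2 w) s y) t x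
      = pd2 R t x * pd2 (pd2 w) t x + R t x * pd2 (pd2 (pd2 w)) t x := pd2_mul hR hW2 t x
  -- first x-derivative of Lw, as a function
  have m5 : pd2 (fun s y => pd1 w s y + lam ^ 2 / 2 * (R s y * (R s y * pd2 (pd2 w) s y))
        + lam ^ 2 * (R s y * pd2 w s y))
      = fun a b => pd2 (pd1 w) a b
          + lam ^ 2 / 2 * pd2 (fun s y => R s y * (R s y * pd2 (pd2 w) s y)) a b
          + lam ^ 2 * pd2 (fun s y => R s y * pd2 w s y) a b := by
    funext a b
    have s1 : pd2 (fun s y => pd1 w s y + lam ^ 2 / 2 * (R s y * (R s y * pd2 (pd2 w) s y))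
          + lam ^ 2 * (R s y * pd2 w s y)) a b
        = pd2 (fun s y => pd1 w s y + lam ^ 2 / 2 * (R s y * (R s y * pd2 (pd2 w) s y))) a b
          + pd2 (fun s y => lam ^ 2 * (R s y * pd2 w s y)) a b := pd2_add h12 hcRW a b
    have s2 : pd2 (fun s y => pd1 w s y
          + lam ^ 2 / 2 * (R s y * (R s y * pd2 (pd2 w) s y))) a b
        = pd2 (pd1 w) a b
          + pd2 (fun s y => lam ^ 2 / 2 * (R s y * (R s y * pd2 (pd2 w) s y))) a b :=
      pd2_add hWt hcD a b
    have s3 : pd2 (fun s y => lam ^ 2 / 2 * (R s y * (R s y * pd2 (pd2 w) s y))) a b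
        = lam ^ 2 / 2 * pd2 (fun s y => R s y * (R s y * pd2 (pd2 w) s y)) a b :=
      pd2_const_mul _ hD' a b
    have s4 : pd2 (fun s y => lam ^ 2 * (R s y * pd2 w s y)) a b
        = lam ^ 2 * pd2 (fun s y => R s y * pd2 w s y) a b := pd2_const_mul _ hRW1 a b
    rw [s1, s2, s3, s4]
  -- second x-derivative of Lw
  have hA : ContDiff ℝ (⊤ : ℕ∞) (uncurry (pd2 (pd1 w))) := contDiff_pd2 hWt
  have hB : ContDiff ℝ (⊤ : ℕ∞)
      (uncurry (pd2 (fun s y => R s y * (R s y * pd2 (pd2 w) s y)))) := contDiff_pd2 hD'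
  have hC : ContDiff ℝ (⊤ : ℕ∞) (uncurry (pd2 (fun s y => R s y * pd2 w s y))) := contDiff_pd2 hRW1
  have hcB : ContDiff ℝ (⊤ : ℕ∞) (uncurry (fun a b =>
      lam ^ 2 / 2 * pd2 (fun s y => R s y * (R s y * pd2 (pd2 w) s y)) a b)) :=
    contDiff_const.mul hB
  have hcC : ContDiff ℝ (⊤ : ℕ∞) (uncurry (fun a b =>
      lam ^ 2 * pd2 (fun s y => R s y * pd2 w s y) a b)) := contDiff_const.mul hC
  have hAB : ContDiff ℝ (⊤ : ℕ∞) (uncurry (fun a b => pd2 (pd1 w) a b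
      + lam ^ 2 / 2 * pd2 (fun s y => R s y * (R s y * pd2 (pd2 w) s y)) a b)) := hA.add hcB
  have m6 : pd2 (pd2 (fun s y => pd1 w s y + lam ^ 2 / 2 * (R s y * (R s y * pd2 (pd2 w) s y))
        + lam ^ 2 * (R s y * pd2 w s y))) t x
      = pd2 (pd2 (pd1 w)) t x
        + lam ^ 2 / 2 * pd2 (pd2 (fun s y => R s y * (R s y * pd2 (pd2 w) s y))) t x
        + lam ^ 2 * pd2 (pd2 (fun s y => R s y * pd2 w s y)) t x := by
    rw [m5]
    have s1 : pd2 (fun a b => pd2 (pd1 w) a b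
          + lam ^ 2 / 2 * pd2 (fun s y => R s y * (R s y * pd2 (pd2 w) s y)) a b
          + lam ^ 2 * pd2 (fun s y => R s y * pd2 w s y) a b) t x
        = pd2 (fun a b => pd2 (pd1 w) a b
            + lam ^ 2 / 2 * pd2 (fun s y => R s y * (R s y * pd2 (pd2 w) s y)) a b) t x
          + pd2 (fun a b => lam ^ 2 * pd2 (fun s y => R s y * pd2 w s y) a b) t x :=
      pd2_add hAB hcC t x
    have s2 : pd2 (fun a b => pd2 (pd1 w) a b
          + lam ^ 2 / 2 * pd2 (fun s y => R s y * (R s y * pd2 (pd2 w) s y)) a b) t x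
        = pd2 (pd2 (pd1 w)) t x
          + pd2 (fun a b =>
              lam ^ 2 / 2 * pd2 (fun s y => R s y * (R s y * pd2 (pd2 w) s y)) a b) t x :=
      pd2_add hA hcB t x
    have s3 : pd2 (fun a b =>
          lam ^ 2 / 2 * pd2 (fun s y => R s y * (R s y * pd2 (pd2 w) s y)) a b) t x
        = lam ^ 2 / 2 * pd2 (pd2 (fun s y => R s y * (R s y * pd2 (pd2 w) s y))) t x :=
      pd2_const_mul _ hB t x
    have s4 : pd2 (fun a b => lam ^ 2 * pd2 (fun s y => R s y * pd2 w s y) a b) t x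
        = lam ^ 2 * pd2 (pd2 (fun s y => R s y * pd2 w s y)) t x := pd2_const_mul _ hC t x
    rw [s1, s2, s3, s4]
  -- expand pd2 (pd2 (R wₓ))
  have m8 : pd2 (fun s y => R s y * pd2 w s y)
      = fun a b => pd2 R a b * pd2 w a b + R a b * pd2 (pd2 w) a b :=
    funext fun a => funext fun b => pd2_mul hR hW1 a b
  have hRxW1 : ContDiff ℝ (⊤ : ℕ∞) (uncurry (fun a b => pd2 R a b * pd2 w a b)) := hRx.mul hW1
  have m9 : pd2 (pd2 (fun s y => R s y * pd2 w s y)) t x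
      = (pd2 (pd2 R) t x * pd2 w t x + pd2 R t x * pd2 (pd2 w) t x)
        + (pd2 R t x * pd2 (pd2 w) t x + R t x * pd2 (pd2 (pd2 w)) t x) := by
    rw [m8]
    have s1 : pd2 (fun a b => pd2 R a b * pd2 w a b + R a b * pd2 (pd2 w) a b) t x
        = pd2 (fun a b => pd2 R a b * pd2 w a b) t x
          + pd2 (fun a b => R a b * pd2 (pd2 w) a b) t x := pd2_add hRxW1 hRW2 t x
    have s2 : pd2 (fun a b => pd2 R a b * pd2 w a b) t x
        = pd2 (pd2 R) t x * pd2 w t x + pd2 R t x * pd2 (pd2 w) t x := pd2_mul hRx hW1 t x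
    have s3 : pd2 (fun a b => R a b * pd2 (pd2 w) a b) t x
        = pd2 R t x * pd2 (pd2 w) t x + R t x * pd2 (pd2 (pd2 w)) t x := pd2_mul hR hW2 t x
    rw [s1, s2, s3]
  -- the PDE for R in pd-form
  have pde : pd1 R t x + lam ^ 2 / 2 * R t x ^ 2 * pd2 (pd2 R) t x = 0 := by
    have h := hRpde t x
    rwa [derivT hR t x, deriv2X hR t x] at h
  rw [m1, m2, m3, m4, m6, m9, c1]
  linear_combination (2 * R t x * pd2 (pd2 w) t x) * pde
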